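/- Let X_1, …, X_k be strings and let J ≥ 0. Suppose that for each i ∈ [1..k] we are given J pairwise disjoint substrings X_{i,1}, …, X_{i,J} of X_i appearing in left-to-right order. Then δ_E(X_1, …, X_k) ≤ Σ_{j=1}^J δ_E(X_{1,j}, X_{2,j}, …, X_{k,j}) + Σ_{i=1}^k (|X_i| − Σ_{j=1}^J |X_{i,j}|). -/

import Mathlib

/-- A cost structure for Levenshtein distance (as in the former Mathlib `Levenshtein.Cost`). -/
structure Levenshtein.Cost (α β δ : Type*) where
  delete : α → δ
  insert : β → δ
  substitute : α → β → δ

/-- The default cost: unit deletions and insertions, substitution free iff equal. -/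
def Levenshtein.defaultCost {α : Type*} [DecidableEq α] : Levenshtein.Cost α α ℕ where
  delete _ := 1
  insert _ := 1
  substitute a b := if a = b then 0 else 1

/-- Levenshtein distance with costs `C` (same recursion as the former Mathlib `levenshtein`). -/
def levenshtein {α β δ : Type*} [AddZeroClass δ] [Min δ] (C : Levenshtein.Cost α β δ) :
    List α → List β → δ
  | [], ys => (ys.map C.insert).sum
  | xs, [] => (xs.map C.delete).sum
  | x :: xs, y :: ys =>
    min (C.delete x + levenshtein C xs (y :: ys))
      (min (C.insert y + levenshtein C (x :: xs) ys) (C.substitute x y + levenshtein C xs ys))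
termination_by xs ys => xs.length + ys.length

/-- The Levenshtein edit distance between two strings. -/
def editDist {α : Type*} [DecidableEq α] (s t : List α) : ℕ :=
  levenshtein Levenshtein.defaultCost s t

/-- The median edit distance of a family of strings. -/
noncomputable def medianED {α : Type*} [DecidableEq α] (L : List (List α)) : ℕ :=
  sInf { d : ℕ | ∃ T : List α, d = (L.map fun s => editDist s T).sum }

/-- `frag X s l` is the contiguous fragment of `X` of length `l` starting at
(0-indexed) position `s`. -/
def frag {α : Type*} (X : List α) (s l : ℕ) : List α :=
  (X.drop s).take l

/-!
Take an optimal median `T j` of every window `j` and concatenate them. Edit distance is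
subadditive under concatenation, so each `X i` is edited into this concatenation by aligning
every window with its median and deleting all characters outside the windows, at cost
`Σⱼ δ(X_{i,j}, T j) + (|X i| - Σⱼ |X_{i,j}|)`. Summing over `i` and exchanging the sums gives the
bound.
-/

section Frag

variable {α : Type*}

lemma frag_length_of_add_le {X : List α} {s l : ℕ} (h : s + l ≤ X.length) :
    (frag X s l).length = l := by
  simp only [frag, List.length_take, List.length_drop]
  omega

lemma frag_take_of_add_le (X : List α) {n s l : ℕ} (h : s + l ≤ n) :
    frag (X.take n) s l = frag X s l := by
  simp only [frag, List.drop_take, List.take_take]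
  congr 1
  omega

lemma drop_eq_frag_append_drop (X : List α) (s l : ℕ) :
    X.drop s = frag X s l ++ X.drop (s + l) := by
  rw [frag, ← List.drop_drop, List.take_append_drop]

end Frag

section EditDist

variable {α : Type*} [DecidableEq α]

@[simp]
lemma editDist_nil_left (t : List α) : editDist [] t = t.length := by
  simp [editDist, levenshtein, Levenshtein.defaultCost]

@[simp]
lemma editDist_nil_right (s : List α) : editDist s [] = s.length := by
  cases s <;> simp [editDist, levenshtein, Levenshtein.defaultCost, Nat.add_comm]

lemma editDist_cons_cons (x y : α) (xs ys : List α) :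
    editDist (x :: xs) (y :: ys) =
      min (1 + editDist xs (y :: ys))
        (min (1 + editDist (x :: xs) ys) ((if x = y then 0 else 1) + editDist xs ys)) := by
  rw [editDist, levenshtein]
  rfl

lemma editDist_cons_left_le (x : α) (xs t : List α) :
    editDist (x :: xs) t ≤ 1 + editDist xs t := by
  cases t with
  | nil => simp [Nat.add_comm]
  | cons y ys => rw [editDist_cons_cons]; exact min_le_left _ _

lemma editDist_cons_right_le (s : List α) (y : α) (ys : List α) :
    editDist s (y :: ys) ≤ 1 + editDist s ys := by
  cases s with
  | nil => simp [Nat.add_comm]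
  | cons x xs => rw [editDist_cons_cons]; exact (min_le_right _ _).trans (min_le_left _ _)

lemma editDist_append_left_le (B C D : List α) :
    editDist B (C ++ D) ≤ C.length + editDist B D := by
  induction C with
  | nil => simp
  | cons y C ih =>
    have := editDist_cons_right_le B y (C ++ D)
    simp only [List.cons_append, List.length_cons]
    omega

theorem editDist_append_le (A B C D : List α) :
    editDist (A ++ B) (C ++ D) ≤ editDist A C + editDist B D := by
  induction A generalizing C with
  | nil => simpa using editDist_append_left_le B C D
  | cons x A ihA =>
    induction C with
    | nil =>
      have := editDist_cons_left_le x (A ++ B) D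
      have := ihA []
      simp only [List.nil_append, List.cons_append, editDist_nil_right, List.length_cons] at *
      omega
    | cons y C ihC =>
      simp only [List.cons_append] at ihC ⊢
      rw [editDist_cons_cons x y A C, ← min_add_add_right, ← min_add_add_right, le_min_iff,
        le_min_iff]
      refine ⟨?_, ?_, ?_⟩
      · have := editDist_cons_left_le x (A ++ B) (y :: (C ++ D))
        have := ihA (y :: C)
        simp only [List.cons_append] at this
        omega
      · have := editDist_cons_right_le (x :: (A ++ B)) y (C ++ D)
        omega
      · have := ihA C
        rw [editDist_cons_cons]
        exact (min_le_right _ _).trans (min_le_right _ _) |>.trans (by omega)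

-- The gap cost is added on the left so that no truncated subtraction occurs.
theorem editDist_flatten_add_sum_le {J : ℕ} (X : List α) (start len : Fin J → ℕ)
    (T : Fin J → List α) (hvalid : ∀ j, start j + len j ≤ X.length)
    (horder : ∀ j j', j < j' → start j + len j ≤ start j') :
    editDist X (List.ofFn T).flatten + ∑ j, len j ≤
      ∑ j, editDist (frag X (start j) (len j)) (T j) + X.length := by
  induction J generalizing X with
  | zero => simp
  | succ J ih =>
    rw [Fin.sum_univ_castSucc, Fin.sum_univ_castSucc]
    set s := start (Fin.last J)
    set l := len (Fin.last J)
    have hlast : s + l ≤ X.length := hvalid _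
    have hs : (X.take s).length = s := List.length_take_of_le (by omega)
    have hfrag (j : Fin J) : frag (X.take s) (start j.castSucc) (len j.castSucc) =
        frag X (start j.castSucc) (len j.castSucc) :=
      frag_take_of_add_le X (horder _ _ (Fin.castSucc_lt_last j))
    have hinit := ih (X.take s) (start ∘ Fin.castSucc) (len ∘ Fin.castSucc) (T ∘ Fin.castSucc)
      (fun j => by rw [hs]; exact horder _ _ (Fin.castSucc_lt_last j))
      (fun j j' hjj' => horder _ _ (Fin.castSucc_lt_castSucc_iff.mpr hjj'))
    simp only [Function.comp_apply, hs, hfrag] at hinit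
    have hsplit : editDist X (List.ofFn T).flatten ≤
        editDist (X.take s) (List.ofFn (T ∘ Fin.castSucc)).flatten +
          (editDist (frag X s l) (T (Fin.last J)) + (X.length - (s + l))) := by
      calc editDist X (List.ofFn T).flatten
          = editDist (X.take s ++ (frag X s l ++ X.drop (s + l)))
              ((List.ofFn (T ∘ Fin.castSucc)).flatten ++ (T (Fin.last J) ++ [])) := by
            rw [← drop_eq_frag_append_drop, List.take_append_drop, List.ofFn_succ',
              List.concat_eq_append, List.flatten_append]
            simp [Function.comp_def]
        _ ≤ _ := (editDist_append_le _ _ _ _).trans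
            (Nat.add_le_add_left ((editDist_append_le _ _ _ _).trans (by simp)) _)
    omega

lemma medianED_le (L : List (List α)) (T : List α) :
    medianED L ≤ (L.map fun s => editDist s T).sum :=
  Nat.sInf_le ⟨T, rfl⟩

lemma exists_medianED_eq (L : List (List α)) :
    ∃ T, medianED L = (L.map fun s => editDist s T).sum :=
  Nat.sInf_mem (s := {d | ∃ T, d = (L.map fun s => editDist s T).sum}) ⟨_, [], rfl⟩

end EditDist

/-- Given, for each `i`, `J` pairwise disjoint substrings
`X_{i,1}, …, X_{i,J}` of `X_i` in left-to-right order, the median edit distance of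
`X₁, …, X_k` is at most the sum over `j` of the median edit distances of the windows
`(X_{1,j}, …, X_{k,j})` plus `Σᵢ (|Xᵢ| − Σⱼ |X_{i,j}|)`. -/
theorem median_le_windowed_sum
    {α : Type*} [DecidableEq α] (k J : ℕ) (X : Fin k → List α)
    (start len : Fin k → Fin J → ℕ)
    (hvalid : ∀ i j, start i j + len i j ≤ (X i).length)
    (horder : ∀ (i : Fin k) (j j' : Fin J), j < j' → start i j + len i j ≤ start i j') :
    medianED (List.ofFn X) ≤
      (∑ j, medianED (List.ofFn fun i => frag (X i) (start i j) (len i j))) +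
        ∑ i, ((X i).length - ∑ j, (frag (X i) (start i j) (len i j)).length) := by
  choose T hT using fun j =>
    exists_medianED_eq (List.ofFn fun i => frag (X i) (start i j) (len i j))
  simp only [List.map_ofFn, List.sum_ofFn, Function.comp_def] at hT
  have hX i := editDist_flatten_add_sum_le (X i) (start i) (len i) T (hvalid i) (horder i)
  calc medianED (List.ofFn X) ≤ ∑ i, editDist (X i) (List.ofFn T).flatten := by
        simpa [List.map_ofFn, List.sum_ofFn] using medianED_le (List.ofFn X) (List.ofFn T).flatten
    _ ≤ ∑ i, (∑ j, editDist (frag (X i) (start i j) (len i j)) (T j) +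
          ((X i).length - ∑ j, len i j)) :=
        Finset.sum_le_sum fun i _ => by have := hX i; omega
    _ = _ := by
        simp only [Finset.sum_add_distrib, hT, frag_length_of_add_le (hvalid _ _)]
        rw [Finset.sum_comm]
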